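/- arXiv:1710.08240 — 3 statements merged into one kernel-verified Lean document; each statement's English description precedes it below -/
import Mathlib

section
/- Let μ be a Borel probability measure on ℝ and let ε > 0 be such that α := ∫_ℝ exp(ε x²) dμ(x) < ∞. Then for every t ≥ 36·log(2α)/ε, the function f_{μ,t}(x) = ∫_ℝ exp(-(x-y)²/(2t)) dμ(y) is differentiable on ℝ, and its derivative satisfies f_{μ,t}'(x) < 0 for every x ≥ √t/2 and f_{μ,t}'(x) > 0 for every x ≤ -√t/2. -/
/-!
Differentiating under the integral, `f'_{μ,t}(x) = t⁻¹ ∫ (y - x) e^{-(x-y)²/2t} dμ(y)`.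
Markov's inequality for `e^{εy²}` puts mass at least `1/2` on `[-R, R]`, where `εR² = log (2α)`,
and mass at most `α e^{-εx²}` on `(x, ∞)`. For `x ≥ √t/2 ≥ 3R` the points of `[-R, R]` contribute
at most `-(x - R) e^{-(x+R)²/2t} / 2`, the points beyond `x` at most `√t α e^{-εx²}` because
`|s| e^{-s²/2t} ≤ √t`, and the bound on `t` makes the first term win. Reflecting `μ` through the
origin gives the case `x ≤ -√t/2`.
-/

open MeasureTheory Real Set Filter Topology

lemma abs_mul_exp_neg_sq_div_le_sqrt (s : ℝ) {t : ℝ} (ht : 0 < t) :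
    |s| * exp (-s ^ 2 / (2 * t)) ≤ √t := by
  refine Real.le_sqrt_of_sq_le ?_
  have hv : s ^ 2 / t ≤ exp (s ^ 2 / t) := by linarith [add_one_le_exp (s ^ 2 / t)]
  calc (|s| * exp (-s ^ 2 / (2 * t))) ^ 2 = t * (s ^ 2 / t) * exp (-(s ^ 2 / t)) := by
        rw [mul_pow, sq_abs, ← exp_nat_mul]
        field_simp
        ring_nf
    _ ≤ t * exp (s ^ 2 / t) * exp (-(s ^ 2 / t)) := by gcongr
    _ = t := by rw [mul_assoc, ← exp_add, add_neg_cancel, exp_zero, mul_one]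

-- The function `f_{μ,t}`, i.e. the density of `μ ∗ N(0, t)` without the factor `(2πt)^{-1/2}`.
noncomputable def gaussConv (μ : Measure ℝ) (t x : ℝ) : ℝ :=
  ∫ y, exp (-(x - y) ^ 2 / (2 * t)) ∂μ

lemma hasDerivAt_exp_neg_sq_div {t : ℝ} (ht : t ≠ 0) (y x : ℝ) :
    HasDerivAt (fun x => exp (-(x - y) ^ 2 / (2 * t)))
      ((y - x) / t * exp (-(x - y) ^ 2 / (2 * t))) x := by
  have h := ((((hasDerivAt_id' x).sub_const y).fun_pow 2).fun_neg.div_const (2 * t)).exp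
  refine h.congr_deriv ?_
  field_simp
  ring

lemma hasDerivAt_gaussConv (μ : Measure ℝ) [IsFiniteMeasure μ] {t : ℝ} (ht : 0 < t) (x : ℝ) :
    HasDerivAt (gaussConv μ t) (t⁻¹ * ∫ y, (y - x) * exp (-(x - y) ^ 2 / (2 * t)) ∂μ) x := by
  have hbound : ∀ y x : ℝ, ‖(y - x) / t * exp (-(x - y) ^ 2 / (2 * t))‖ ≤ √t / t := by
    intro y x
    rw [norm_mul, norm_div, Real.norm_of_nonneg ht.le, Real.norm_of_nonneg (exp_pos _).le,
      Real.norm_eq_abs, abs_sub_comm, div_mul_eq_mul_div]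
    gcongr
    exact abs_mul_exp_neg_sq_div_le_sqrt _ ht
  have key := hasDerivAt_integral_of_dominated_loc_of_deriv_le (μ := μ) (x₀ := x)
    (F := fun x y => exp (-(x - y) ^ 2 / (2 * t)))
    (F' := fun x y => (y - x) / t * exp (-(x - y) ^ 2 / (2 * t)))
    (bound := fun _ => √t / t) (Metric.ball_mem_nhds x one_pos)
    (Eventually.of_forall fun x => by fun_prop)
    (Integrable.of_bound (by fun_prop) 1 (Eventually.of_forall fun y => by
      rw [Real.norm_of_nonneg (exp_pos _).le, exp_le_one_iff, neg_div, neg_nonpos]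
      positivity))
    (by fun_prop) (Eventually.of_forall fun y x _ => hbound y x) (integrable_const _)
    (Eventually.of_forall fun y x _ => hasDerivAt_exp_neg_sq_div ht.ne' y x)
  refine key.2.congr_deriv ?_
  rw [← integral_const_mul]
  congr 1 with y
  ring

lemma measureReal_le_mul_exp_neg_of_sq_le {μ : Measure ℝ} [IsFiniteMeasure μ] {ε : ℝ}
    (hε : 0 ≤ ε) (hint : Integrable (fun y => exp (ε * y ^ 2)) μ) {s : Set ℝ} {c : ℝ}
    (hs : ∀ y ∈ s, c ^ 2 ≤ y ^ 2) :
    μ.real s ≤ (∫ y, exp (ε * y ^ 2) ∂μ) * exp (-(ε * c ^ 2)) := by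
  have hsub : s ⊆ {y | exp (ε * c ^ 2) ≤ exp (ε * y ^ 2)} := fun y hy =>
    exp_le_exp.2 (mul_le_mul_of_nonneg_left (hs y hy) hε)
  rw [exp_neg, ← div_eq_mul_inv, le_div_iff₀ (exp_pos _), mul_comm]
  calc exp (ε * c ^ 2) * μ.real s
      ≤ exp (ε * c ^ 2) * μ.real {y | exp (ε * c ^ 2) ≤ exp (ε * y ^ 2)} := by
        gcongr
        exact measure_ne_top _ _
    _ ≤ ∫ y, exp (ε * y ^ 2) ∂μ :=
        mul_meas_ge_le_integral_of_nonneg (Eventually.of_forall fun y => (exp_pos _).le) hint _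

lemma sub_mul_exp_neg_sq_div_le_indicator {t x R : ℝ} (ht : 0 < t) (hRx : R ≤ x) (y : ℝ) :
    (y - x) * exp (-(x - y) ^ 2 / (2 * t)) ≤
      (Icc (-R) R).indicator (fun _ => -((x - R) * exp (-(x + R) ^ 2 / (2 * t)))) y +
        (Ioi x).indicator (fun _ => √t) y := by
  by_cases hyx : x < y
  · have hyR : y ∉ Icc (-R) R := fun h => by linarith [h.2]
    rw [indicator_of_notMem hyR, indicator_of_mem (show y ∈ Ioi x from hyx), zero_add]
    calc (y - x) * exp (-(x - y) ^ 2 / (2 * t)) ≤ |x - y| * exp (-(x - y) ^ 2 / (2 * t)) := by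
          gcongr
          rw [abs_sub_comm]
          exact le_abs_self _
      _ ≤ √t := abs_mul_exp_neg_sq_div_le_sqrt _ ht
  have hyx' : y ∉ Ioi x := hyx
  rw [indicator_of_notMem hyx', add_zero]
  by_cases hyR : y ∈ Icc (-R) R
  · rw [indicator_of_mem hyR, le_neg, ← neg_mul, neg_sub]
    gcongr <;> linarith [hyR.1, hyR.2]
  · rw [indicator_of_notMem hyR]
    exact mul_nonpos_of_nonpos_of_nonneg (by linarith) (exp_pos _).le

lemma integral_sub_mul_exp_neg_sq_div_neg_of_lt {μ : Measure ℝ} [IsFiniteMeasure μ] {t x R : ℝ}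
    (ht : 0 < t) (hRx : R ≤ x)
    (htail : √t * μ.real (Ioi x) <
      μ.real (Icc (-R) R) * ((x - R) * exp (-(x + R) ^ 2 / (2 * t)))) :
    ∫ y, (y - x) * exp (-(x - y) ^ 2 / (2 * t)) ∂μ < 0 := by
  have hint : Integrable (fun y => (y - x) * exp (-(x - y) ^ 2 / (2 * t))) μ :=
    Integrable.of_bound (by fun_prop) (√t) (Eventually.of_forall fun y => by
      rw [norm_mul, Real.norm_of_nonneg (exp_pos _).le, Real.norm_eq_abs, abs_sub_comm]
      exact abs_mul_exp_neg_sq_div_le_sqrt _ ht)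
  set E := exp (-(x + R) ^ 2 / (2 * t))
  have hIcc : Integrable ((Icc (-R) R).indicator fun _ => -((x - R) * E)) μ :=
    (integrable_const _).indicator measurableSet_Icc
  have hIoi : Integrable ((Ioi x).indicator fun _ => √t) μ :=
    (integrable_const _).indicator measurableSet_Ioi
  calc ∫ y, (y - x) * exp (-(x - y) ^ 2 / (2 * t)) ∂μ
      ≤ ∫ y, ((Icc (-R) R).indicator (fun _ => -((x - R) * E)) y +
          (Ioi x).indicator (fun _ => √t) y) ∂μ :=
        integral_mono hint (hIcc.add hIoi) (sub_mul_exp_neg_sq_div_le_indicator ht hRx)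
    _ = √t * μ.real (Ioi x) - μ.real (Icc (-R) R) * ((x - R) * E) := by
        rw [integral_add hIcc hIoi, integral_indicator_const _ measurableSet_Icc,
          integral_indicator_const _ measurableSet_Ioi, smul_eq_mul, smul_eq_mul]
        ring
    _ < 0 := by linarith

lemma three_mul_exp_mul_exp_neg_lt {ε t x R L : ℝ} (ht : 0 < t) (hRx : 3 * R ≤ x)
    (hxt : t ≤ 4 * x ^ 2) (hL : log 2 ≤ L) (hεt : 36 * L ≤ ε * t) (hR : 0 ≤ R) :
    3 * exp L * exp (-(ε * x ^ 2)) < exp (-(x + R) ^ 2 / (2 * t)) := by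
  have hlog3 : log 3 ≤ 2 := by linarith [log_le_sub_one_of_pos (show (0 : ℝ) < 3 by norm_num)]
  have hlog2 := log_two_gt_d9
  have hx : 0 < x ^ 2 := by linarith
  have hxR : (x + R) ^ 2 ≤ 16 / 9 * x ^ 2 := by nlinarith
  rw [← exp_log (show (0 : ℝ) < 3 by norm_num), ← exp_add, ← exp_add, exp_lt_exp, neg_div,
    lt_neg, div_lt_iff₀ (by positivity)]
  -- With `log 3 ≤ 2`, `εt ≥ 36L` and `t ≤ 4x²` this reduces to `64L > 160/9`, true as `L ≥ log 2`.
  nlinarith [mul_nonneg (sub_nonneg.2 hεt) hx.le, mul_nonneg (sub_nonneg.2 hxt)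
    (show 0 ≤ 2 + L by linarith), mul_pos (show 0 < L - 0.69 by linarith) hx]

lemma one_le_integral_exp_mul_sq {μ : Measure ℝ} [IsProbabilityMeasure μ] {ε : ℝ} (hε : 0 ≤ ε)
    (hint : Integrable (fun y => exp (ε * y ^ 2)) μ) : 1 ≤ ∫ y, exp (ε * y ^ 2) ∂μ :=
  calc (1 : ℝ) = ∫ _, (1 : ℝ) ∂μ := by simp
    _ ≤ ∫ y, exp (ε * y ^ 2) ∂μ :=
      integral_mono (integrable_const 1) hint fun y => one_le_exp (by positivity)

lemma log_two_le_log_two_mul_integral_exp_mul_sq {μ : Measure ℝ} [IsProbabilityMeasure μ]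
    {ε : ℝ} (hε : 0 ≤ ε) (hint : Integrable (fun y => exp (ε * y ^ 2)) μ) :
    log 2 ≤ log (2 * ∫ y, exp (ε * y ^ 2) ∂μ) :=
  log_le_log two_pos (by linarith [one_le_integral_exp_mul_sq hε hint])

lemma one_half_le_measureReal_Icc {μ : Measure ℝ} [IsProbabilityMeasure μ] {ε R : ℝ}
    (hε : 0 ≤ ε) (hint : Integrable (fun y => exp (ε * y ^ 2)) μ) (hR : 0 ≤ R)
    (hRε : 2 * ∫ y, exp (ε * y ^ 2) ∂μ ≤ exp (ε * R ^ 2)) :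
    1 / 2 ≤ μ.real (Icc (-R) R) := by
  have h := measureReal_le_mul_exp_neg_of_sq_le hε hint (s := (Icc (-R) R)ᶜ) (c := R)
    fun y hy => by
      rw [mem_compl_iff, mem_Icc, not_and_or, not_le, not_le] at hy
      rcases hy with hy | hy <;> nlinarith
  have half : (∫ y, exp (ε * y ^ 2) ∂μ) * exp (-(ε * R ^ 2)) ≤ 1 / 2 := by
    rw [exp_neg, ← div_eq_mul_inv, div_le_iff₀ (exp_pos _)]
    linarith
  rw [probReal_compl_eq_one_sub measurableSet_Icc] at h
  linarith

lemma deriv_gaussConv_neg_of_large_time {μ : Measure ℝ} [IsProbabilityMeasure μ]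
    {ε t x : ℝ} (hε : 0 < ε) (hint : Integrable (fun y => exp (ε * y ^ 2)) μ)
    (ht : 36 * log (2 * ∫ y, exp (ε * y ^ 2) ∂μ) / ε ≤ t) (hx : √t / 2 ≤ x) :
    deriv (gaussConv μ t) x < 0 := by
  have hL := log_two_le_log_two_mul_integral_exp_mul_sq hε.le hint
  set α := ∫ y, exp (ε * y ^ 2) ∂μ
  have hα : 1 ≤ α := one_le_integral_exp_mul_sq hε.le hint
  set L := log (2 * α)
  have hεt : 36 * L ≤ ε * t := by rw [div_le_iff₀ hε] at ht; linarith
  have ht0 : 0 < t := pos_of_mul_pos_right (by linarith [log_pos one_lt_two]) hε.le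
  set R := √(L / ε)
  have hR : 0 ≤ R := sqrt_nonneg _
  have hεR : ε * R ^ 2 = L := by
    rw [sq_sqrt (div_nonneg (by linarith [log_pos one_lt_two]) hε.le)]
    field_simp
  have hRt : 6 * R ≤ √t := le_sqrt_of_sq_le (by nlinarith)
  have hxt : t ≤ 4 * x ^ 2 := by nlinarith [sq_sqrt ht0.le, sqrt_nonneg t]
  have hx0 : 0 ≤ x := by linarith
  have hIcc : 1 / 2 ≤ μ.real (Icc (-R) R) :=
    one_half_le_measureReal_Icc hε.le hint hR (by rw [hεR, exp_log (by positivity)])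
  have hIoi : μ.real (Ioi x) ≤ α * exp (-(ε * x ^ 2)) :=
    measureReal_le_mul_exp_neg_of_sq_le hε.le hint fun y hy =>
      pow_le_pow_left₀ hx0 (le_of_lt hy) 2
  have hE := three_mul_exp_mul_exp_neg_lt ht0 (by linarith) hxt hL hεt hR
  rw [exp_log (by positivity)] at hE
  rw [(hasDerivAt_gaussConv μ ht0 x).deriv]
  refine mul_neg_of_pos_of_neg (inv_pos.2 ht0)
    (integral_sub_mul_exp_neg_sq_div_neg_of_lt (R := R) ht0 (by linarith) ?_)
  calc √t * μ.real (Ioi x) ≤ √t * (α * exp (-(ε * x ^ 2))) := by gcongr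
    _ < √t / 6 * exp (-(x + R) ^ 2 / (2 * t)) := by nlinarith [sqrt_pos.2 ht0]
    _ ≤ 1 / 2 * ((x - R) * exp (-(x + R) ^ 2 / (2 * t))) := by
      rw [← mul_assoc]; gcongr; linarith
    _ ≤ μ.real (Icc (-R) R) * ((x - R) * exp (-(x + R) ^ 2 / (2 * t))) := by
      gcongr
      exact mul_nonneg (by linarith) (exp_pos _).le

lemma gaussConv_map_neg (μ : Measure ℝ) (t x : ℝ) :
    gaussConv (μ.map Neg.neg) t (-x) = gaussConv μ t x := by
  rw [gaussConv, gaussConv, measurableEmbedding_neg.integral_map]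
  congr 1 with y
  ring_nf

theorem gaussian_convolution_deriv_sign_large_time
    (μ : Measure ℝ) [IsProbabilityMeasure μ] (ε : ℝ) (hε : 0 < ε)
    (hint : Integrable (fun x => Real.exp (ε * x ^ 2)) μ)
    (α : ℝ) (hα : α = ∫ x, Real.exp (ε * x ^ 2) ∂μ)
    (t : ℝ) (ht : 36 * Real.log (2 * α) / ε ≤ t) :
    Differentiable ℝ (fun x : ℝ => ∫ y, Real.exp (-(x - y) ^ 2 / (2 * t)) ∂μ) ∧
    (∀ x : ℝ, Real.sqrt t / 2 ≤ x →
      deriv (fun x : ℝ => ∫ y, Real.exp (-(x - y) ^ 2 / (2 * t)) ∂μ) x < 0) ∧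
    (∀ x : ℝ, x ≤ -(Real.sqrt t / 2) →
      0 < deriv (fun x : ℝ => ∫ y, Real.exp (-(x - y) ^ 2 / (2 * t)) ∂μ) x) := by
  subst hα
  change Differentiable ℝ (gaussConv μ t) ∧ (∀ x, √t / 2 ≤ x → deriv (gaussConv μ t) x < 0) ∧
    ∀ x, x ≤ -(√t / 2) → 0 < deriv (gaussConv μ t) x
  have ht0 : 0 < t := lt_of_lt_of_le (div_pos (mul_pos (by norm_num) ((log_pos one_lt_two).trans_le
    (log_two_le_log_two_mul_integral_exp_mul_sq hε.le hint))) hε) ht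
  have : IsProbabilityMeasure (μ.map Neg.neg) :=
    Measure.isProbabilityMeasure_map measurable_neg.aemeasurable
  have hint_neg : Integrable (fun y => exp (ε * y ^ 2)) (μ.map Neg.neg) := by
    rw [measurableEmbedding_neg.integrable_map_iff]
    simpa [Function.comp_def] using hint
  have hα_neg : ∫ y, exp (ε * y ^ 2) ∂(μ.map Neg.neg) = ∫ y, exp (ε * y ^ 2) ∂μ := by
    rw [measurableEmbedding_neg.integral_map]
    simp
  refine ⟨fun x => (hasDerivAt_gaussConv μ ht0 x).differentiableAt,
    fun x hx => deriv_gaussConv_neg_of_large_time hε hint ht hx, fun x hx => ?_⟩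
  rw [← funext (gaussConv_map_neg μ t), deriv_comp_neg, neg_pos]
  exact deriv_gaussConv_neg_of_large_time hε hint_neg (hα_neg ▸ ht) (by linarith)
end

section
/- Let μ be a Borel probability measure on ℝ such that β := ∫_ℝ |x|³ dμ(x) < ∞. Then for every t > 0 with t ≥ 10·β^{1/3}, the function g_{μ,t}(x) = ∫_ℝ ((x-y)² + t²)⁻¹ dμ(y) is twice differentiable on ℝ and its second derivative satisfies g_{μ,t}''(x) < 0 for every x with |x| ≤ t/4. -/
open MeasureTheory Real Set Filter Topology

/-!
Differentiating twice under the integral, `g_{μ,t}''(x) = ∫ k''(x - y) dμ(y)` with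
`k(z) = (z² + t²)⁻¹`, so `k''(z) = (6z² - 2t²) / (z² + t²)³`. This kernel is at most `1 / (2t⁴)`
everywhere and at most `-32 / (125 t⁴)` for `|z| ≤ t / 2`. For `|x| ≤ t / 4` the mass of `μ` outside
`(-t/4, t/4)` is controlled by Markov's inequality for the third moment, and `t³ ≥ 1000 β` makes
that contribution too small to cancel the negative one.
-/

theorem hasDerivAt_integral_comp_sub {μ : Measure ℝ} [IsFiniteMeasure μ] {φ φ' : ℝ → ℝ}
    {B C : ℝ} (hφ : ∀ z, HasDerivAt φ (φ' z) z) (hφ' : Continuous φ')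
    (hφ_bdd : ∀ z, |φ z| ≤ B) (hφ'_bdd : ∀ z, |φ' z| ≤ C) (x : ℝ) :
    HasDerivAt (fun x => ∫ y, φ (x - y) ∂μ) (∫ y, φ' (x - y) ∂μ) x := by
  have hφ_cont : Continuous φ := continuous_iff_continuousAt.2 fun z => (hφ z).continuousAt
  have hmeas : ∀ x, AEStronglyMeasurable (fun y => φ (x - y)) μ := fun x =>
    (hφ_cont.comp (continuous_sub_left x)).aestronglyMeasurable
  have hint : Integrable (fun y => φ (x - y)) μ :=
    .of_bound (hmeas x) B (.of_forall fun y => hφ_bdd (x - y))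
  refine (hasDerivAt_integral_of_dominated_loc_of_deriv_le (bound := fun _ => C) univ_mem
    (.of_forall hmeas) hint (hφ'.comp (continuous_sub_left x)).aestronglyMeasurable
    (.of_forall fun y x _ => hφ'_bdd (x - y)) (integrable_const C)
    (.of_forall fun y x _ => (hφ (x - y)).comp_sub_const x y)).2

/-- Integrate the pointwise bound `g y ≤ -c₁ + (c₁ + c₂) (|y| / r)ⁿ`. -/
theorem integral_le_neg_add_moment_of_le {μ : Measure ℝ} [IsProbabilityMeasure μ] {g : ℝ → ℝ}
    {n : ℕ} {r c₁ c₂ : ℝ} (hg : Integrable g μ) (hmom : Integrable (fun y => |y| ^ n) μ)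
    (hr : 0 < r) (hc : 0 ≤ c₁ + c₂) (hle : ∀ y, g y ≤ c₂) (hnear : ∀ y, |y| < r → g y ≤ -c₁) :
    ∫ y, g y ∂μ ≤ -c₁ + (c₁ + c₂) / r ^ n * ∫ y, |y| ^ n ∂μ := by
  have hK : 0 ≤ (c₁ + c₂) / r ^ n := by positivity
  have hpt : ∀ y, g y ≤ -c₁ + (c₁ + c₂) / r ^ n * |y| ^ n := by
    intro y
    rcases lt_or_ge |y| r with hy | hy
    · linarith [hnear y hy, mul_nonneg hK (pow_nonneg (abs_nonneg y) n)]
    · have hrn : r ^ n ≤ |y| ^ n := pow_le_pow_left₀ hr.le hy n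
      have : c₁ + c₂ ≤ (c₁ + c₂) / r ^ n * |y| ^ n := by
        rw [div_mul_eq_mul_div, le_div_iff₀ (by positivity)]
        exact mul_le_mul_of_nonneg_left hrn hc
      linarith [hle y]
  calc ∫ y, g y ∂μ ≤ ∫ y, (-c₁ + (c₁ + c₂) / r ^ n * |y| ^ n) ∂μ :=
        integral_mono hg ((integrable_const _).add (hmom.const_mul _)) hpt
    _ = -c₁ + (c₁ + c₂) / r ^ n * ∫ y, |y| ^ n ∂μ := by
        rw [integral_add (integrable_const _) (hmom.const_mul _), integral_const_mul]
        simp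

section CauchyKernel

variable {t : ℝ}

theorem hasDerivAt_inv_sq_add_sq (ht : t ≠ 0) (z : ℝ) :
    HasDerivAt (fun z => (z ^ 2 + t ^ 2)⁻¹) (-(2 * z) / (z ^ 2 + t ^ 2) ^ 2) z := by
  have hpos : 0 < z ^ 2 + t ^ 2 := by positivity
  refine (((hasDerivAt_pow 2 z).add_const (t ^ 2)).inv hpos.ne').congr_deriv ?_
  norm_num

theorem hasDerivAt_neg_two_mul_div_sq_add_sq_sq (ht : t ≠ 0) (z : ℝ) :
    HasDerivAt (fun z => -(2 * z) / (z ^ 2 + t ^ 2) ^ 2)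
      ((6 * z ^ 2 - 2 * t ^ 2) / (z ^ 2 + t ^ 2) ^ 3) z := by
  have hpos : 0 < z ^ 2 + t ^ 2 := by positivity
  refine (((hasDerivAt_id z).const_mul 2).neg.div
    (((hasDerivAt_pow 2 z).add_const (t ^ 2)).pow 2) (pow_ne_zero 2 hpos.ne')).congr_deriv ?_
  simp only [Pi.neg_apply, Pi.pow_apply, id]
  field_simp
  ring

variable (ht : 0 < t) (z : ℝ)
include ht

theorem abs_inv_sq_add_sq_le : |(z ^ 2 + t ^ 2)⁻¹| ≤ (t ^ 2)⁻¹ := by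
  rw [abs_of_pos (by positivity)]
  exact inv_anti₀ (by positivity) (by nlinarith)

theorem abs_neg_two_mul_div_sq_add_sq_sq_le : |-(2 * z) / (z ^ 2 + t ^ 2) ^ 2| ≤ 1 / t ^ 3 := by
  have hpos : 0 < z ^ 2 + t ^ 2 := by positivity
  rw [abs_div, abs_neg, abs_mul, abs_two, abs_of_pos (pow_pos hpos 2),
    div_le_div_iff₀ (pow_pos hpos 2) (pow_pos ht 3)]
  have hz : |z| ^ 2 = z ^ 2 := sq_abs z
  -- `2|z| t ≤ z² + t²` and `t² ≤ z² + t²`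
  nlinarith [mul_nonneg (sq_nonneg (|z| - t)) (sq_nonneg t), abs_nonneg z,
    mul_nonneg (mul_nonneg (abs_nonneg z) ht.le) (sq_nonneg z)]

theorem abs_six_mul_sq_sub_div_sq_add_sq_pow_three_le :
    |(6 * z ^ 2 - 2 * t ^ 2) / (z ^ 2 + t ^ 2) ^ 3| ≤ 6 / t ^ 4 := by
  have hpos : 0 < z ^ 2 + t ^ 2 := by positivity
  have hnum : |6 * z ^ 2 - 2 * t ^ 2| ≤ 6 * (z ^ 2 + t ^ 2) := by
    rw [abs_le]; constructor <;> nlinarith [sq_nonneg z, sq_nonneg t]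
  have ht4 : t ^ 4 ≤ (z ^ 2 + t ^ 2) ^ 2 := by nlinarith [sq_nonneg z, sq_nonneg t]
  rw [abs_div, abs_of_pos (pow_pos hpos 3), div_le_div_iff₀ (pow_pos hpos 3) (pow_pos ht 4)]
  calc |6 * z ^ 2 - 2 * t ^ 2| * t ^ 4 ≤ 6 * (z ^ 2 + t ^ 2) * (z ^ 2 + t ^ 2) ^ 2 :=
        mul_le_mul hnum ht4 (by positivity) (by positivity)
    _ = 6 * (z ^ 2 + t ^ 2) ^ 3 := by ring

/-- Attained at `z² = t²`. -/
theorem six_mul_sq_sub_div_sq_add_sq_pow_three_le :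
    (6 * z ^ 2 - 2 * t ^ 2) / (z ^ 2 + t ^ 2) ^ 3 ≤ 1 / (2 * t ^ 4) := by
  have hpos : 0 < z ^ 2 + t ^ 2 := by positivity
  rw [div_le_div_iff₀ (pow_pos hpos 3) (by positivity)]
  nlinarith [mul_nonneg (sq_nonneg (z ^ 2 - t ^ 2)) (by positivity : 0 ≤ z ^ 2 + 5 * t ^ 2)]

/-- Attained at `|z| = t / 2`. -/
theorem six_mul_sq_sub_div_sq_add_sq_pow_three_le_of_abs_le (hz : |z| ≤ t / 2) :
    (6 * z ^ 2 - 2 * t ^ 2) / (z ^ 2 + t ^ 2) ^ 3 ≤ -(32 / (125 * t ^ 4)) := by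
  have hpos : 0 < z ^ 2 + t ^ 2 := by positivity
  have hz2 : z ^ 2 ≤ t ^ 2 / 4 := by
    nlinarith [sq_abs z, abs_nonneg z]
  rw [← neg_div, div_le_div_iff₀ (pow_pos hpos 3) (by positivity)]
  nlinarith [mul_nonneg (by linarith : 0 ≤ t ^ 2 / 4 - z ^ 2)
    (by positivity : 0 ≤ 32 * z ^ 4 + 104 * z ^ 2 * t ^ 2 + 872 * t ^ 4)]

end CauchyKernel

theorem integral_six_mul_sq_sub_div_sq_add_sq_pow_three_neg {μ : Measure ℝ}
    [IsProbabilityMeasure μ] (hint : Integrable (fun y => |y| ^ 3) μ) {t x : ℝ} (ht : 0 < t)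
    (hmom : 1000 * ∫ y, |y| ^ 3 ∂μ ≤ t ^ 3) (hx : |x| ≤ t / 4) :
    ∫ y, (6 * (x - y) ^ 2 - 2 * t ^ 2) / ((x - y) ^ 2 + t ^ 2) ^ 3 ∂μ < 0 := by
  have hcont : Continuous fun y => (6 * (x - y) ^ 2 - 2 * t ^ 2) / ((x - y) ^ 2 + t ^ 2) ^ 3 :=
    Continuous.div (by fun_prop) (by fun_prop) fun y => by positivity
  have hg : Integrable (fun y => (6 * (x - y) ^ 2 - 2 * t ^ 2) / ((x - y) ^ 2 + t ^ 2) ^ 3) μ :=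
    .of_bound hcont.aestronglyMeasurable _
      (.of_forall fun y => abs_six_mul_sq_sub_div_sq_add_sq_pow_three_le ht (x - y))
  have hnear : ∀ y, |y| < t / 4 →
      (6 * (x - y) ^ 2 - 2 * t ^ 2) / ((x - y) ^ 2 + t ^ 2) ^ 3 ≤ -(32 / (125 * t ^ 4)) :=
    fun y hy => six_mul_sq_sub_div_sq_add_sq_pow_three_le_of_abs_le ht (x - y)
      (by linarith [abs_sub x y])
  have hbound := integral_le_neg_add_moment_of_le hg hint (by positivity) (by positivity)
    (fun y => six_mul_sq_sub_div_sq_add_sq_pow_three_le ht (x - y)) hnear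
  calc _ ≤ _ := hbound
    _ ≤ -(32 / (125 * t ^ 4)) + (32 / (125 * t ^ 4) + 1 / (2 * t ^ 4)) / (t / 4) ^ 3 *
        (t ^ 3 / 1000) := by gcongr; linarith
    _ = -(32 - 189 * 64 / 2000) / (125 * t ^ 4) := by field_simp; ring
    _ < 0 := by apply div_neg_of_neg_of_pos <;> norm_num; positivity

theorem cauchy_convolution_second_deriv_neg_large_time
    (μ : Measure ℝ) [IsProbabilityMeasure μ]
    (hint : Integrable (fun x : ℝ => |x| ^ 3) μ)
    (β : ℝ) (hβ : β = ∫ x, |x| ^ 3 ∂μ)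
    (t : ℝ) (ht0 : 0 < t) (ht : 10 * β ^ ((1 : ℝ) / 3) ≤ t) :
    Differentiable ℝ (fun x : ℝ => ∫ y, ((x - y) ^ 2 + t ^ 2)⁻¹ ∂μ) ∧
    Differentiable ℝ (deriv (fun x : ℝ => ∫ y, ((x - y) ^ 2 + t ^ 2)⁻¹ ∂μ)) ∧
    (∀ x : ℝ, |x| ≤ t / 4 →
      deriv (deriv (fun x : ℝ => ∫ y, ((x - y) ^ 2 + t ^ 2)⁻¹ ∂μ)) x < 0) := by
  have hd1 (x : ℝ) := hasDerivAt_integral_comp_sub (μ := μ) (hasDerivAt_inv_sq_add_sq ht0.ne')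
    (.div (by fun_prop) (by fun_prop) fun z => by positivity) (abs_inv_sq_add_sq_le ht0)
    (abs_neg_two_mul_div_sq_add_sq_sq_le ht0) x
  have hd2 (x : ℝ) := hasDerivAt_integral_comp_sub (μ := μ)
    (hasDerivAt_neg_two_mul_div_sq_add_sq_sq ht0.ne')
    (.div (by fun_prop) (by fun_prop) fun z => by positivity)
    (abs_neg_two_mul_div_sq_add_sq_sq_le ht0)
    (abs_six_mul_sq_sub_div_sq_add_sq_pow_three_le ht0) x
  have hderiv : deriv (fun x : ℝ => ∫ y, ((x - y) ^ 2 + t ^ 2)⁻¹ ∂μ) =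
      fun x => ∫ y, -(2 * (x - y)) / ((x - y) ^ 2 + t ^ 2) ^ 2 ∂μ :=
    funext fun x => (hd1 x).deriv
  have hβ0 : 0 ≤ β := hβ ▸ integral_nonneg fun y => by positivity
  have hmom : 1000 * β ≤ t ^ 3 := by
    rw [one_div, ← le_div_iff₀' (by norm_num),
      rpow_inv_le_iff_of_pos hβ0 (by positivity) (by norm_num)] at ht
    have : (t / 10) ^ (3 : ℝ) = t ^ 3 / 1000 := by norm_cast; ring
    linarith
  refine ⟨fun x => (hd1 x).differentiableAt, hderiv ▸ fun x => (hd2 x).differentiableAt,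
    fun x hx => ?_⟩
  rw [hderiv, (hd2 x).deriv]
  exact integral_six_mul_sq_sub_div_sq_add_sq_pow_three_neg hint ht0 (hβ ▸ hmom) hx
end

section
/- Let (w_n)_{n≥1} be positive reals with ∑_{n≥1} w_n = 1 and let (a_n)_{n≥1} be a strictly increasing sequence of reals. For each k set b_k := inf_{n≠k} |a_k - a_n - 1|, and assume that w_k·b_k³ → ∞ as k → ∞. Then for every t > 0 the function G_t(x) = ∑_{n≥1} w_n·((x - a_n)² + t²)⁻¹ satisfies G_t'(a_k - 1) > 0 for all sufficiently large k; in particular, G_t is not unimodal for any t > 0. -/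
open MeasureTheory Real Set Filter Topology

/-- A function `f : ℝ → ℝ` is unimodal if there is a mode `a` such that `f` is
nondecreasing on `(-∞, a]` and nonincreasing on `[a, ∞)`. -/
def Unimodal (f : ℝ → ℝ) : Prop :=
  ∃ a : ℝ, MonotoneOn f (Set.Iic a) ∧ AntitoneOn f (Set.Ici a)

/-!
At `x = aₖ - 1` the atom `aₖ` contributes `2 wₖ / (1 + t²)²` to `G_t'(x)`. Every other atom lies
at distance at least `bₖ` from `x`, and `|d/du (u² + t²)⁻¹| ≤ 2 / |u|³`, so together they
contribute at least `-2 / bₖ³`. Hence `G_t'(aₖ - 1) > 0` as soon as `wₖ bₖ³ > (1 + t²)²`.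
Since `wₖ ≤ 1`, also `bₖ → ∞`; as `aₖ ≥ a₀` and `bₖ ≤ |aₖ - a₀ - 1|`, this forces `aₖ → ∞`,
whereas a unimodal function has nonpositive derivative to the right of its mode.
-/

theorem Unimodal.eventually_deriv_nonpos {f : ℝ → ℝ} (hf : Unimodal f) :
    ∀ᶠ x in atTop, deriv f x ≤ 0 := by
  obtain ⟨m, -, hanti⟩ := hf
  filter_upwards [eventually_gt_atTop m] with x hx
  rw [← derivWithin_of_isOpen isOpen_Ioi hx]
  exact (hanti.mono Ioi_subset_Ici_self).derivWithin_nonpos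

theorem not_unimodal_of_tendsto_of_deriv_pos {ι : Type*} {l : Filter ι} [l.NeBot]
    {f : ℝ → ℝ} {x : ι → ℝ} (hx : Tendsto x l atTop) (hpos : ∀ᶠ i in l, 0 < deriv f (x i)) :
    ¬ Unimodal f := fun hf =>
  let ⟨_, hle, hlt⟩ := ((hx.eventually hf.eventually_deriv_nonpos).and hpos).exists
  hle.not_gt hlt

theorem tendsto_atTop_of_le_abs {ι : Type*} {l : Filter ι} {u b : ι → ℝ} {c : ℝ}
    (hlow : ∀ᶠ i in l, c ≤ u i) (hb : Tendsto b l atTop) (hbu : ∀ᶠ i in l, b i ≤ |u i|) :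
    Tendsto u l atTop := by
  refine tendsto_atTop.2 fun M => ?_
  filter_upwards [hlow, hbu, hb.eventually_gt_atTop (max M (-c))] with i hci hbi hMi
  rcases abs_cases (u i) with ⟨h, -⟩ | ⟨h, -⟩ <;> rw [h] at hbi
  · linarith [le_max_left M (-c)]
  · linarith [le_max_right M (-c)]

theorem tendsto_atTop_of_tendsto_mul_pow {ι : Type*} {l : Filter ι} {w b : ι → ℝ} {m : ℕ}
    (hw : ∀ i, w i ≤ 1) (hb : ∀ i, 0 ≤ b i) (h : Tendsto (fun i => w i * b i ^ m) l atTop) :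
    Tendsto b l atTop := by
  have hpow : Tendsto (fun i => b i ^ m) l atTop :=
    tendsto_atTop_mono (fun i => mul_le_of_le_one_left (pow_nonneg (hb i) m) (hw i)) h
  refine tendsto_atTop.2 fun M => ?_
  filter_upwards [hpow.eventually_gt_atTop (max M 0 ^ m)] with i hi
  exact le_max_left M 0 |>.trans (lt_of_pow_lt_pow_left₀ m (hb i) hi).le

noncomputable section

def cauchyKernel (t u : ℝ) : ℝ := (u ^ 2 + t ^ 2)⁻¹

def cauchyKernelDeriv (t u : ℝ) : ℝ := -(2 * u) / (u ^ 2 + t ^ 2) ^ 2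

theorem hasDerivAt_cauchyKernel {t : ℝ} (ht : t ≠ 0) (u : ℝ) :
    HasDerivAt (cauchyKernel t) (cauchyKernelDeriv t u) u := by
  have hne : u ^ 2 + t ^ 2 ≠ 0 := by positivity
  exact (((hasDerivAt_pow 2 u).add_const (t ^ 2)).fun_inv hne).congr_deriv
    (by norm_num [cauchyKernelDeriv])

theorem cauchyKernelDeriv_neg_one (t : ℝ) : cauchyKernelDeriv t (-1) = 2 / (1 + t ^ 2) ^ 2 := by
  norm_num [cauchyKernelDeriv]

theorem abs_cauchyKernelDeriv (t u : ℝ) :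
    |cauchyKernelDeriv t u| = 2 * |u| / (u ^ 2 + t ^ 2) ^ 2 := by
  rw [cauchyKernelDeriv, abs_div, abs_neg, abs_mul, abs_two,
    abs_of_nonneg (sq_nonneg (u ^ 2 + t ^ 2))]

theorem abs_cauchyKernelDeriv_le {t : ℝ} (ht : 0 < t) (u : ℝ) :
    |cauchyKernelDeriv t u| ≤ (t ^ 3)⁻¹ := by
  have hd : 0 < u ^ 2 + t ^ 2 := by positivity
  -- `2|u| t³ ≤ (u² + t²)²`: multiply AM-GM `2|u|t ≤ u² + t²` by `t² ≤ u² + t²`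
  have hamgm : 2 * |u| * t ≤ u ^ 2 + t ^ 2 := by nlinarith [sq_nonneg (|u| - t), sq_abs u]
  rw [abs_cauchyKernelDeriv, div_le_iff₀ (by positivity), ← div_eq_inv_mul,
    le_div_iff₀ (by positivity)]
  nlinarith [mul_le_mul hamgm (le_add_of_nonneg_left (sq_nonneg u)) (by positivity) hd.le]

theorem abs_cauchyKernelDeriv_le_of_le_abs (t : ℝ) {u b : ℝ} (hb : 0 < b) (hbu : b ≤ |u|) :
    |cauchyKernelDeriv t u| ≤ 2 / b ^ 3 := by
  have hu : 0 < |u| := hb.trans_le hbu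
  calc |cauchyKernelDeriv t u| = 2 * |u| / (u ^ 2 + t ^ 2) ^ 2 := abs_cauchyKernelDeriv t u
    _ ≤ 2 * |u| / (|u| ^ 2) ^ 2 := by
        gcongr
        rw [sq_abs]
        exact le_add_of_nonneg_right (sq_nonneg t)
    _ = 2 / |u| ^ 3 := by field_simp
    _ ≤ 2 / b ^ 3 := by gcongr

def cauchyMixture (w a : ℕ → ℝ) (t x : ℝ) : ℝ := ∑' n, w n * cauchyKernel t (x - a n)

section Mixture

variable {w : ℕ → ℝ} (a : ℕ → ℝ) {t : ℝ}

theorem summable_mul_cauchyKernelDeriv (hw : Summable w) (ht : 0 < t) (x : ℝ) :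
    Summable fun n => w n * cauchyKernelDeriv t (x - a n) :=
  .of_norm_bounded (hw.abs.mul_right (t ^ 3)⁻¹) fun n => by
    simpa only [norm_mul, Real.norm_eq_abs] using
      mul_le_mul_of_nonneg_left (abs_cauchyKernelDeriv_le ht _) (abs_nonneg (w n))

theorem hasDerivAt_cauchyMixture (hw : Summable w) (ht : 0 < t) (x : ℝ) :
    HasDerivAt (cauchyMixture w a t) (∑' n, w n * cauchyKernelDeriv t (x - a n)) x := by
  refine hasDerivAt_tsum (hw.abs.mul_right (t ^ 3)⁻¹)
    (fun n y => ((hasDerivAt_cauchyKernel ht.ne' _).comp_sub_const y (a n)).const_mul (w n))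
    (fun n y => ?_) (y₀ := 0) ?_ x
  · simpa only [norm_mul, Real.norm_eq_abs] using
      mul_le_mul_of_nonneg_left (abs_cauchyKernelDeriv_le ht _) (abs_nonneg (w n))
  · refine .of_norm_bounded (hw.abs.mul_right (t ^ 2)⁻¹) fun n => ?_
    rw [norm_mul, Real.norm_eq_abs, Real.norm_eq_abs, cauchyKernel, abs_inv,
      abs_of_pos (by positivity : 0 < (0 - a n) ^ 2 + t ^ 2)]
    gcongr
    exact le_add_of_nonneg_left (sq_nonneg (0 - a n))

theorem sub_le_tsum_mul_cauchyKernelDeriv (hw : ∀ n, 0 ≤ w n) (hsw : Summable w) (ht : 0 < t)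
    {x b : ℝ} {k : ℕ} (hb : 0 < b) (hfar : ∀ n ≠ k, b ≤ |x - a n|) :
    w k * cauchyKernelDeriv t (x - a k) - 2 / b ^ 3 * ∑' n, w n ≤
      ∑' n, w n * cauchyKernelDeriv t (x - a n) := by
  have htermwise : ∀ n,
      (if n = k then w k * cauchyKernelDeriv t (x - a k) else 0) - 2 / b ^ 3 * w n ≤
        w n * cauchyKernelDeriv t (x - a n) := by
    intro n
    split_ifs with hn
    · subst hn
      have : 0 ≤ 2 / b ^ 3 * w n := by have := hw n; positivity
      linarith
    · have := mul_le_mul_of_nonneg_left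
        (abs_cauchyKernelDeriv_le_of_le_abs t hb (hfar n hn)) (hw n)
      nlinarith [neg_abs_le (cauchyKernelDeriv t (x - a n)), hw n]
  have hlower := (hasSum_ite_eq k (w k * cauchyKernelDeriv t (x - a k))).sub
    (hsw.hasSum.mul_left (2 / b ^ 3))
  exact hasSum_le htermwise hlower (summable_mul_cauchyKernelDeriv a hsw ht x).hasSum

theorem deriv_cauchyMixture_sub_one_pos (hw : ∀ n, 0 ≤ w n) (hsw : Summable w)
    (hsum : ∑' n, w n ≤ 1) (ht : 0 < t) {b : ℝ} {k : ℕ} (hb : 0 < b)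
    (hfar : ∀ n ≠ k, b ≤ |a k - 1 - a n|)
    (hwb : (1 + t ^ 2) ^ 2 < w k * b ^ 3) :
    0 < deriv (cauchyMixture w a t) (a k - 1) := by
  have hlower := sub_le_tsum_mul_cauchyKernelDeriv a hw hsw ht hb hfar
  rw [sub_sub_cancel_left, cauchyKernelDeriv_neg_one] at hlower
  rw [(hasDerivAt_cauchyMixture a hsw ht _).deriv]
  refine lt_of_lt_of_le (sub_pos.2 ?_) hlower
  calc 2 / b ^ 3 * ∑' n, w n ≤ 2 / b ^ 3 := mul_le_of_le_one_right (by positivity) hsum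
    _ < w k * (2 / (1 + t ^ 2) ^ 2) := by
      rw [div_lt_iff₀ (by positivity), mul_right_comm, mul_div_assoc',
        lt_div_iff₀ (by positivity)]
      linarith

end Mixture

end

theorem discrete_cauchy_mixture_never_unimodal
    (w a b : ℕ → ℝ) (hw : ∀ n, 0 < w n) (hsum : ∑' n, w n = 1)
    (ha : StrictMono a)
    (hb : ∀ k, b k = sInf {r : ℝ | ∃ n, n ≠ k ∧ r = |a k - a n - 1|})
    (hbtop : Tendsto (fun k => w k * b k ^ 3) atTop atTop) :
    ∀ t : ℝ, 0 < t →
      (∀ᶠ k in atTop,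
        0 < deriv (fun x : ℝ => ∑' n, w n * ((x - a n) ^ 2 + t ^ 2)⁻¹) (a k - 1)) ∧
      ¬ Unimodal (fun x : ℝ => ∑' n, w n * ((x - a n) ^ 2 + t ^ 2)⁻¹) := by
  intro t ht
  have hsw : Summable w := by
    by_contra h
    simp [tsum_eq_zero_of_not_summable h] at hsum
  have hbdd : ∀ k, BddBelow {r : ℝ | ∃ n, n ≠ k ∧ r = |a k - a n - 1|} :=
    fun k => ⟨0, by rintro r ⟨n, -, rfl⟩; exact abs_nonneg _⟩
  have hfar : ∀ k, ∀ n ≠ k, b k ≤ |a k - 1 - a n| := fun k n hn => by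
    rw [hb k, sub_right_comm]
    exact csInf_le (hbdd k) ⟨n, hn, rfl⟩
  have hb_nonneg : ∀ k, 0 ≤ b k := fun k => by
    rw [hb k]
    exact Real.sInf_nonneg (by rintro r ⟨n, -, rfl⟩; exact abs_nonneg _)
  have hpos : ∀ᶠ k in atTop, 0 < deriv (cauchyMixture w a t) (a k - 1) := by
    filter_upwards [hbtop.eventually_gt_atTop ((1 + t ^ 2) ^ 2)] with k hk
    have hbk : 0 < b k := (hb_nonneg k).lt_of_ne fun h => by
      rw [← h] at hk
      nlinarith
    exact deriv_cauchyMixture_sub_one_pos a (fun n => (hw n).le) hsw hsum.le ht hbk (hfar k) hk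
  refine ⟨hpos, not_unimodal_of_tendsto_of_deriv_pos ?_ hpos⟩
  have hw_le : ∀ k, w k ≤ 1 := fun k => hsum ▸ hsw.le_tsum k fun n _ => (hw n).le
  have hsep : Tendsto (fun k => a k - 1 - a 0) atTop atTop :=
    tendsto_atTop_of_le_abs (c := -1)
      (Eventually.of_forall fun k => by linarith [ha.monotone k.zero_le])
      (tendsto_atTop_of_tendsto_mul_pow hw_le hb_nonneg hbtop)
      ((eventually_ne_atTop 0).mono fun k hk => hfar k 0 hk.symm)
  simpa using tendsto_atTop_add_const_right _ (a 0) hsep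
end
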